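/- arXiv:2010.07076 — 4 statements merged into one kernel-verified Lean document; each statement's English description precedes it below -/
import Mathlib

section
/- For any string S and pattern P, the set of suffixes of S that have P as a prefix forms a contiguous interval in the lexicographically sorted list of all suffixes of S. -/
/-- Length of the longest common prefix of two lists. -/
def lcpLen {α : Type*} [DecidableEq α] : List α → List α → ℕ
  | a :: u, b :: v => if a = b then lcpLen u v + 1 else 0
  | _, _ => 0

private lemma prefix_of_between {α : Type*} [LinearOrder α] :
    ∀ (P x y z : List α), P <+: x → P <+: z → x ≤ y → y ≤ z → P <+: y := by
  intro P
  induction P with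
  | nil => intro _ y _ _ _ _ _; exact List.nil_prefix
  | cons p ps ih =>
    intro x y z h1 h2 hxy hyz
    rcases hxy.eq_or_lt with rfl | hxy
    · exact h1
    rcases hyz.eq_or_lt with rfl | hyz
    · exact h2
    obtain ⟨x', rfl, hx'⟩ : ∃ x', x = p :: x' ∧ ps <+: x' := by
      obtain ⟨t, ht⟩ := h1; exact ⟨ps ++ t, by simp [← ht], ⟨t, rfl⟩⟩
    obtain ⟨z', rfl, hz'⟩ : ∃ z', z = p :: z' ∧ ps <+: z' := by
      obtain ⟨t, ht⟩ := h2; exact ⟨ps ++ t, by simp [← ht], ⟨t, rfl⟩⟩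
    have hxy' : List.Lex (· < ·) (p :: x') y := hxy
    have hyz' : List.Lex (· < ·) y (p :: z') := hyz
    cases y with
    | nil => cases hxy'
    | cons c y' =>
      cases hxy' with
      | cons h =>
        cases hyz' with
        | cons h' =>
          exact (List.cons_prefix_cons).2 ⟨rfl, ih x' y' z' hx' hz' (le_of_lt h) (le_of_lt h')⟩
        | rel h' => exact absurd h' (lt_irrefl p)
      | rel h =>
        cases hyz' with
        | cons h' => exact absurd h (lt_irrefl p)
        | rel h' => exact absurd (h.trans h') (lt_irrefl p)

/-- the set of (ranks of) suffixes of `S` having `P` as a prefix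
forms a contiguous interval in the lexicographically sorted list of suffixes. -/
theorem suffixes_with_prefix_form_interval
    {α : Type*} [LinearOrder α] (S P : List α) (n : ℕ) (hn : n = S.length)
    (SA : ℕ → ℕ)
    (hbij : Set.BijOn SA (Set.Iio n) (Set.Iio n))
    (hsort : ∀ i j : ℕ, i < j → j < n → S.drop (SA i) < S.drop (SA j))
    (hne : {i : ℕ | i < n ∧ P <+: S.drop (SA i)}.Nonempty) :
    ∃ a b : ℕ, a ≤ b ∧
      {i : ℕ | i < n ∧ P <+: S.drop (SA i)} = Set.Icc a b := by
  set s : Set ℕ := {i : ℕ | i < n ∧ P <+: S.drop (SA i)} with hs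
  have hsub : s ⊆ Set.Iio n := fun i hi => hi.1
  have hfin : s.Finite := (Set.finite_Iio n).subset hsub
  have hbdd : BddAbove s := hfin.bddAbove
  refine ⟨sInf s, sSup s, le_csSup hbdd (Nat.sInf_mem hne), ?_⟩
  have ha : sInf s ∈ s := Nat.sInf_mem hne
  have hb : sSup s ∈ s := Set.Nonempty.csSup_mem hne hfin
  ext i
  constructor
  · intro hi
    exact ⟨Nat.sInf_le hi, le_csSup hbdd hi⟩
  · rintro ⟨h1, h2⟩
    have hin : i < n := lt_of_le_of_lt h2 hb.1
    refine ⟨hin, ?_⟩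
    rcases h1.eq_or_lt with rfl | h1'
    · exact ha.2
    rcases h2.eq_or_lt with rfl | h2'
    · exact hb.2
    have hl : S.drop (SA (sInf s)) ≤ S.drop (SA i) := (hsort _ _ h1' hin).le
    have hr : S.drop (SA i) ≤ S.drop (SA (sSup s)) := (hsort _ _ h2' hb.1).le
    exact prefix_of_between P _ _ _ ha.2 hb.2 hl hr
end

section
/- In the suffix array SA of a string S with pairwise distinct suffixes, if [s..e] is the interval of suffixes starting with a string W of length t, and we refine it by the first t + j symbols (j ≥ 1), the resulting subintervals are exactly the intervals of suffixes starting with WZ over all strings Z of length j such that WZ occurs in S (suffixes shorter than t+j padded with terminators); moreover these subintervals appear in lexicographic order of Z. -/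
/-!
Along the suffix array the suffixes increase lexicographically, and truncating lists to their
first `k` symbols preserves `≤`; so the keys `(S.drop (SA i)).take (t + j)` are monotone in the
rank `i`. Hence each class of ranks with key `W ++ Z` is order-convex, i.e. an interval, and the
classes are ordered as their keys `W ++ Z` are, i.e. lexicographically in `Z`. A rank in the
interval of `W` has key `W ++ Z` with `Z` the next (at most `j`) symbols of its suffix.
-/

open Set

namespace List

variable {α : Type*}

theorem Lex.take_eq_or_lex_take {r : α → α → Prop} {l l' : List α} (h : Lex r l l') (k : ℕ) :
    l.take k = l'.take k ∨ Lex r (l.take k) (l'.take k) := by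
  induction h generalizing k with
  | nil => cases k <;> simp
  | cons _ ih =>
    cases k with
    | zero => simp
    | succ k => rcases ih k with h | h <;> simp [h, Lex.cons]
  | rel h => cases k <;> simp [Lex.rel h]

theorem monotone_take [LinearOrder α] (k : ℕ) : Monotone (take k : List α → List α) := by
  intro l l' h
  rcases h.eq_or_lt with rfl | h
  · exact le_rfl
  · rcases Lex.take_eq_or_lex_take h k with h | h
    · exact h.le
    · exact le_of_lt h

theorem IsPrefix.take_add_eq_append {W l : List α} (h : W <+: l) (j : ℕ) :
    l.take (W.length + j) = W ++ (l.drop W.length).take j := by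
  rw [take_add, ← prefix_iff_eq_take.mp h]

end List

theorem Set.OrdConnected.inter_preimage_singleton {α β : Type*} [Preorder α] [PartialOrder β]
    {t : Set α} {f : α → β} (ht : t.OrdConnected) (hf : MonotoneOn f t) (c : β) :
    (t ∩ f ⁻¹' {c}).OrdConnected := by
  obtain ⟨u, hu, heq⟩ := ordConnected_singleton.preimage_monotoneOn hf
  rw [heq]
  exact ht.inter hu

theorem Nat.exists_eq_Icc_of_ordConnected {I : Set ℕ} (hI : I.OrdConnected) (hne : I.Nonempty)
    (hbdd : BddAbove I) : ∃ a b, a ≤ b ∧ I = Icc a b :=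
  ⟨sInf I, sSup I, csInf_le_csSup hne (OrderBot.bddBelow I) hbdd,
    (hne.ordConnected_iff_of_bdd (OrderBot.bddBelow I) hbdd).mp hI⟩

theorem refinement_subintervals_lex_order_general
    {α : Type*} [LinearOrder α] (S W : List α) (n t j : ℕ)
    (SA : ℕ → ℕ) (s e : ℕ)
    (hsort : ∀ a b : ℕ, a < b → b < n → S.drop (SA a) < S.drop (SA b))
    (hW : W.length = t)
    (hInt : ∀ i, i < n → ((s ≤ i ∧ i ≤ e) ↔ W <+: S.drop (SA i))) :
    -- each refined class is a contiguous interval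
    (∀ Z : List α,
      {i : ℕ | i < n ∧ s ≤ i ∧ i ≤ e ∧
          (S.drop (SA i)).take (t + j) = W ++ Z}.Nonempty →
      ∃ a b : ℕ, a ≤ b ∧
        {i : ℕ | i < n ∧ s ≤ i ∧ i ≤ e ∧
          (S.drop (SA i)).take (t + j) = W ++ Z} = Set.Icc a b) ∧
    -- the subintervals appear in lexicographic order of Z
    (∀ Z Z' : List α, Z < Z' →
      ∀ i ∈ {i : ℕ | i < n ∧ s ≤ i ∧ i ≤ e ∧
          (S.drop (SA i)).take (t + j) = W ++ Z},
      ∀ i' ∈ {i : ℕ | i < n ∧ s ≤ i ∧ i ≤ e ∧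
          (S.drop (SA i)).take (t + j) = W ++ Z'}, i < i') ∧
    -- every rank of the interval lies in the class of some Z with W ++ Z
    -- occurring in S
    (∀ i, i < n → s ≤ i → i ≤ e → ∃ Z : List α, Z.length ≤ j ∧
      (W ++ Z) <:+: S ∧ (S.drop (SA i)).take (t + j) = W ++ Z) := by
  have hkey : MonotoneOn (fun i => (S.drop (SA i)).take (t + j)) (Iio n) :=
    (List.monotone_take _).comp_monotoneOn
      (StrictMonoOn.monotoneOn fun a _ b hb hab => hsort a b hab hb)
  refine ⟨fun Z hne => ?_, fun Z Z' hZ i hi i' hi' => ?_, fun i hi hsi hie => ?_⟩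
  · have hconn := OrdConnected.inter_preimage_singleton
      (ordConnected_Iio.inter (ordConnected_Icc (a := s) (b := e))) (hkey.mono inter_subset_left)
      (W ++ Z)
    refine Nat.exists_eq_Icc_of_ordConnected ?_ hne ⟨e, fun i hi => hi.2.2.1⟩
    convert hconn using 1
    ext i
    simp [and_assoc]
  · refine hkey.reflect_lt hi.1 hi'.1 ?_
    simp only [hi.2.2.2, hi'.2.2.2]
    exact List.append_left_lt hZ
  · have hprefix := (hInt i hi).mp ⟨hsi, hie⟩
    have htake := hprefix.take_add_eq_append j
    rw [hW] at htake
    exact ⟨_, List.length_take_le _ _,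
      htake ▸ (List.take_prefix _ _).isInfix.trans (List.drop_suffix _ _).isInfix, htake⟩

/-- refining the suffix-array interval `[s..e]` of a string `W`
of length `t` by the first `t + j` symbols yields exactly the intervals of
suffixes starting with `W ++ Z`, over the strings `Z` (of length `j`, or
shorter for truncated suffixes) such that `W ++ Z` occurs in `S`; moreover
these subintervals appear in lexicographic order of `Z`. -/
theorem refinement_subintervals_lex_order
    {α : Type*} [LinearOrder α] (S W : List α) (n t j : ℕ) (hn : n = S.length)
    (SA : ℕ → ℕ) (s e : ℕ)
    (hbij : Set.BijOn SA (Set.Iio n) (Set.Iio n))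
    (hsort : ∀ a b : ℕ, a < b → b < n → S.drop (SA a) < S.drop (SA b))
    (hW : W.length = t) (he : e < n)
    (hInt : ∀ i, i < n → ((s ≤ i ∧ i ≤ e) ↔ W <+: S.drop (SA i))) :
    -- each refined class is a contiguous interval
    (∀ Z : List α,
      {i : ℕ | i < n ∧ s ≤ i ∧ i ≤ e ∧
          (S.drop (SA i)).take (t + j) = W ++ Z}.Nonempty →
      ∃ a b : ℕ, a ≤ b ∧
        {i : ℕ | i < n ∧ s ≤ i ∧ i ≤ e ∧
          (S.drop (SA i)).take (t + j) = W ++ Z} = Set.Icc a b) ∧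
    -- the subintervals appear in lexicographic order of Z
    (∀ Z Z' : List α, Z < Z' →
      ∀ i ∈ {i : ℕ | i < n ∧ s ≤ i ∧ i ≤ e ∧
          (S.drop (SA i)).take (t + j) = W ++ Z},
      ∀ i' ∈ {i : ℕ | i < n ∧ s ≤ i ∧ i ≤ e ∧
          (S.drop (SA i)).take (t + j) = W ++ Z'}, i < i') ∧
    -- every rank of the interval lies in the class of some Z with W ++ Z
    -- occurring in S
    (∀ i, i < n → s ≤ i → i ≤ e → ∃ Z : List α, Z.length ≤ j ∧
      (W ++ Z) <:+: S ∧ (S.drop (SA i)).take (t + j) = W ++ Z) :=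
  refinement_subintervals_lex_order_general S W n t j SA s e hsort hW hInt
end

section
/- Distinct contexts have disjoint occurrence sets whose union is all occurrences: the map from occurrences of P in T to their context strings XPY induces a partition of the suffix-array interval of P. Concretely, if [ds..de] is the SA interval of X P (for a fixed left context X of length ℓ) and it is split at positions p with LCP[p] < |P| + 2ℓ into subintervals, then each subinterval consists exactly of the suffixes starting with one fixed string X P Y with |Y| = ℓ, and distinct subintervals correspond to distinct Y. -/
set_option linter.unusedVariables false

theorem lex_trans' {α : Type*} [LinearOrder α] :
    ∀ {u v w : List α}, List.Lex (· < ·) u v → List.Lex (· < ·) v w → List.Lex (· < ·) u w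
  | _, _, _, List.Lex.nil, List.Lex.cons _ => List.Lex.nil
  | _, _, _, List.Lex.nil, List.Lex.rel _ => List.Lex.nil
  | _, _, _, List.Lex.cons h₁, List.Lex.cons h₂ => List.Lex.cons (lex_trans' h₁ h₂)
  | _, _, _, List.Lex.cons _, List.Lex.rel h₂ => List.Lex.rel h₂
  | _, _, _, List.Lex.rel h₁, List.Lex.cons _ => List.Lex.rel h₁
  | _, _, _, List.Lex.rel h₁, List.Lex.rel h₂ => List.Lex.rel (lt_trans h₁ h₂)

theorem lex_irrefl' {α : Type*} [LinearOrder α] : ∀ (u : List α), ¬ List.Lex (· < ·) u u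
  | _ :: u, List.Lex.cons h => lex_irrefl' u h
  | _ :: _, List.Lex.rel h => lt_irrefl _ h

theorem lex_take' {α : Type*} [LinearOrder α] {u v : List α} (h : List.Lex (· < ·) u v) :
    ∀ m, u.take m = v.take m ∨ List.Lex (· < ·) (u.take m) (v.take m) := by
  induction h with
  | nil =>
    intro m
    cases m with
    | zero => left; rfl
    | succ m => right; exact List.Lex.nil
  | @cons a u v h ih =>
    intro m
    cases m with
    | zero => left; rfl
    | succ m =>
      rcases ih m with h' | h'
      · left; simp [h']
      · right; exact List.Lex.cons h'
  | rel h =>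
    intro m
    cases m with
    | zero => left; rfl
    | succ m => right; exact List.Lex.rel h

theorem lcpLen_take' {α : Type*} [DecidableEq α] :
    ∀ (m : ℕ) (u v : List α), m ≤ lcpLen u v → u.take m = v.take m := by
  intro m
  induction m with
  | zero => intros; simp
  | succ m ih =>
    intro u v h
    match u, v with
    | a :: u, b :: v =>
      by_cases hab : a = b
      · subst hab
        simp only [lcpLen, if_true, eq_self_iff_true] at h
        simp [ih u v (by omega)]
      · simp [lcpLen, hab] at h
    | [], v => simp [lcpLen] at h
    | a :: u, [] => simp [lcpLen] at h

theorem le_lcpLen' {α : Type*} [DecidableEq α] :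
    ∀ (m : ℕ) (u v : List α), m ≤ u.length → u.take m = v.take m → m ≤ lcpLen u v := by
  intro m
  induction m with
  | zero => intros; exact Nat.zero_le _
  | succ m ih =>
    intro u v hlen heq
    match u, v with
    | a :: u, b :: v =>
      simp only [List.take_succ_cons, List.cons.injEq] at heq
      obtain ⟨rfl, heq⟩ := heq
      have := ih u v (by simpa using hlen) heq
      simp only [lcpLen, if_true, eq_self_iff_true]
      omega
    | a :: u, [] => simp at heq
    | [], v => simp at hlen


/-- if `[ds..de]` is the suffix-array interval (in the padded
text) of `X ++ P` for a fixed left context `X` of length `ℓ`, and it is split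
at the positions `p` with `LCP[p] < |P| + 2ℓ`, then two ranks lie in the same
subinterval iff their suffixes share their first `|P| + 2ℓ` symbols, and each
subinterval consists exactly of the suffixes starting with a fixed string
`X ++ P ++ Y` with `|Y| = ℓ` (so distinct subintervals correspond to distinct
`Y`); thus the map from occurrences to contexts partitions the interval. -/
theorem context_subintervals_of_left_extension
    {α : Type*} [LinearOrder α] (T P X : List α) (d : α) (ℓ ds de : ℕ)
    (hdP : d ∉ P) (hdT : d ∉ T) (hP : P ≠ []) (hX : X.length = ℓ)
    (Tp : List α) (hTp : Tp = List.replicate ℓ d ++ T ++ List.replicate ℓ d)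
    (n : ℕ) (hn : n = Tp.length)
    (SA LCP : ℕ → ℕ)
    (hbij : Set.BijOn SA (Set.Iio n) (Set.Iio n))
    (hsort : ∀ a b : ℕ, a < b → b < n → Tp.drop (SA a) < Tp.drop (SA b))
    (hLCP : ∀ k, 0 < k → k < n →
      LCP k = lcpLen (Tp.drop (SA (k - 1))) (Tp.drop (SA k)))
    (hde : de < n)
    (hInt : ∀ i, i < n → ((ds ≤ i ∧ i ≤ de) ↔ (X ++ P) <+: Tp.drop (SA i))) :
    -- the split at positions with LCP < |P| + 2ℓ groups exactly the ranks
    -- whose suffixes share their first |P| + 2ℓ symbols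
    (∀ i i' : ℕ, ds ≤ i → i ≤ i' → i' ≤ de →
      ((Tp.drop (SA i)).take (ℓ + P.length + ℓ)
          = (Tp.drop (SA i')).take (ℓ + P.length + ℓ)
        ↔ ∀ k, i < k → k ≤ i' → ℓ + P.length + ℓ ≤ LCP k)) ∧
    -- each subinterval consists of the suffixes starting with X ++ P ++ Y for
    -- one fixed Y of length ℓ
    (∀ i : ℕ, ds ≤ i → i ≤ de → ∃ Y : List α, Y.length = ℓ ∧
      (Tp.drop (SA i)).take (ℓ + P.length + ℓ) = X ++ P ++ Y) := by
  have hPlen : 1 ≤ P.length := List.length_pos_iff.mpr hP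
  have hnval : n = ℓ + T.length + ℓ := by
    subst hTp; simp [hn]; omega
  have key : ∀ i : ℕ, ds ≤ i → i ≤ de →
      ℓ + P.length + ℓ ≤ (Tp.drop (SA i)).length ∧
      ∃ Y : List α, Y.length = ℓ ∧
        (Tp.drop (SA i)).take (ℓ + P.length + ℓ) = X ++ P ++ Y := by
    intro i hdi hie
    have hin : i < n := lt_of_le_of_lt hie hde
    have hSAi : SA i < n := hbij.mapsTo (Set.mem_Iio.mpr hin)
    obtain ⟨t, ht⟩ := (hInt i hin).mp ⟨hdi, hie⟩
    have hslen : (Tp.drop (SA i)).length = n - SA i := by simp [hn]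
    have hlen1 : ℓ + P.length ≤ (Tp.drop (SA i)).length := by
      rw [← ht]; simp [hX]
    have hidx : (Tp.drop (SA i))[ℓ + P.length - 1]? =
        some (P[P.length - 1]'(by omega)) := by
      rw [← ht, List.append_assoc,
        List.getElem?_append_right (by omega : X.length ≤ ℓ + P.length - 1)]
      have hix : ℓ + P.length - 1 - X.length = P.length - 1 := by omega
      rw [hix, List.getElem?_append_left (by omega : P.length - 1 < P.length),
        List.getElem?_eq_getElem (by omega : P.length - 1 < P.length)]
    have hmem : (P[P.length - 1]'(by omega : P.length - 1 < P.length)) ∈ P :=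
      List.getElem_mem _
    have hbound : SA i + (ℓ + P.length - 1) < ℓ + T.length := by
      by_contra hcon
      push_neg at hcon
      have hq : SA i + (ℓ + P.length - 1) < n := by omega
      have hd : Tp[SA i + (ℓ + P.length - 1)]? = some d := by
        rw [hTp, List.getElem?_append_right
            (by simp; omega : (List.replicate ℓ d ++ T).length ≤ SA i + (ℓ + P.length - 1))]
        rw [List.getElem?_eq_getElem (by simp; omega)]
        simp
      have hc : Tp[SA i + (ℓ + P.length - 1)]? =
          some (P[P.length - 1]'(by omega)) := by
        rw [← List.getElem?_drop]; exact hidx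
      rw [hd] at hc
      exact hdP (by rw [Option.some_inj.mp hc]; exact hmem)
    have hlen2 : ℓ + P.length + ℓ ≤ (Tp.drop (SA i)).length := by omega
    refine ⟨hlen2, ((Tp.drop (SA i)).drop (ℓ + P.length)).take ℓ, ?_, ?_⟩
    · simp only [List.length_take, List.length_drop]; omega
    · rw [List.take_add]
      congr 1
      rw [← ht]
      have hxp : ℓ + P.length = (X ++ P).length := by simp [hX]
      rw [hxp, List.take_left]
  refine ⟨?_, fun i hdi hie => (key i hdi hie).2⟩
  intro i i' hdi hii' hie'
  have hdi' : ds ≤ i' := le_trans hdi hii'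
  have hie : i ≤ de := le_trans hii' hie'
  have hlen : ∀ j, ds ≤ j → j ≤ de →
      ℓ + P.length + ℓ ≤ (Tp.drop (SA j)).length := fun j h1 h2 => (key j h1 h2).1
  constructor
  · intro heq k hik hki'
    have hk0 : 0 < k := by omega
    have hkn : k < n := by omega
    have htj : ∀ j, i ≤ j → j ≤ i' →
        (Tp.drop (SA j)).take (ℓ + P.length + ℓ)
          = (Tp.drop (SA i)).take (ℓ + P.length + ℓ) := by
      intro j hij hji'
      have h1 : (Tp.drop (SA i)).take (ℓ + P.length + ℓ)
            = (Tp.drop (SA j)).take (ℓ + P.length + ℓ) ∨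
          List.Lex (· < ·) ((Tp.drop (SA i)).take (ℓ + P.length + ℓ))
            ((Tp.drop (SA j)).take (ℓ + P.length + ℓ)) := by
        rcases eq_or_lt_of_le hij with rfl | hlt
        · exact Or.inl rfl
        · exact lex_take' (hsort i j hlt (by omega)) _
      have h2 : (Tp.drop (SA j)).take (ℓ + P.length + ℓ)
            = (Tp.drop (SA i')).take (ℓ + P.length + ℓ) ∨
          List.Lex (· < ·) ((Tp.drop (SA j)).take (ℓ + P.length + ℓ))
            ((Tp.drop (SA i')).take (ℓ + P.length + ℓ)) := by
        rcases eq_or_lt_of_le hji' with rfl | hlt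
        · exact Or.inl rfl
        · exact lex_take' (hsort j i' hlt (by omega)) _
      rcases h1 with h1 | h1
      · exact h1.symm
      rcases h2 with h2 | h2
      · exact absurd (h2 ▸ h1) (heq ▸ lex_irrefl' _)
      · exact absurd (heq ▸ lex_trans' h1 h2) (lex_irrefl' _)
    have e1 := htj (k - 1) (by omega) (by omega)
    have e2 := htj k (by omega) hki'
    rw [hLCP k hk0 hkn]
    exact le_lcpLen' _ _ _ (hlen (k - 1) (by omega) (by omega)) (e1.trans e2.symm)
  · intro hall
    have hchain : ∀ j, i ≤ j → j ≤ i' →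
        (Tp.drop (SA i)).take (ℓ + P.length + ℓ)
          = (Tp.drop (SA j)).take (ℓ + P.length + ℓ) := by
      intro j
      induction j with
      | zero =>
        intro h1 _
        have : i = 0 := by omega
        rw [this]
      | succ j ih =>
        intro h1 h2
        rcases Nat.lt_or_ge i (j + 1) with hlt | hge
        · have e := ih (by omega) (by omega)
          have hstep := hall (j + 1) hlt h2
          rw [hLCP (j + 1) (by omega) (by omega)] at hstep
          have := lcpLen_take' _ _ _ hstep
          simp only [Nat.add_sub_cancel] at this
          exact e.trans this
        · have : i = j + 1 := by omega
          rw [this]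
    exact hchain i' hii' le_rfl
end

section
/- Splitting correctness for step 2 of the contextual matching algorithm: let [rs..re] be the SA' interval (in the suffix array of T^rev) of P^rev, and let rs = rs_1 < rs_2 < ... < rs_k be rs together with the positions p in (rs..re] where LCP'[p] < |P| + ℓ. Then k equals the number of distinct strings X of length ℓ such that XP occurs in the ℓ-padded text, and the i-th block [rs_i .. rs_{i+1} - 1] (with rs_{k+1} = re+1) consists exactly of the suffixes of T^rev beginning with P^rev X_i^rev for the i-th such X in lexicographic order of X^rev. -/
/-!
Every suffix of `R = Tp.reverse` starting with `P.reverse` has at least `ℓ` further symbols: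
otherwise the occurrence of `P` in `Tp` would overlap the leading padding, and `d ∉ P`. So its
first `|P| + ℓ` symbols are `P.reverse ++ X.reverse` for a left context `X`, and every occurrence
of `X ++ P` arises this way. Truncation to `|P| + ℓ` symbols preserves the lexicographic order,
so along the interval the truncated suffixes form a monotone sequence: its level sets are
blocks of consecutive ranks, consecutive ranks share a block iff their LCP is at least
`|P| + ℓ`, and its number of distinct values is one plus the number of its increases.
-/

theorem List.Lex.take {α : Type*} {r : α → α → Prop} {l l' : List α} (h : List.Lex r l l')
    (n : ℕ) : List.Lex r (l.take n) (l'.take n) ∨ l.take n = l'.take n := by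
  induction h generalizing n with
  | nil => cases n <;> simp
  | cons _ ih =>
    cases n with
    | zero => simp
    | succ n => exact (ih n).imp List.Lex.cons (by simp [·])
  | rel hab => cases n <;> simp [List.Lex.rel hab]

theorem List.take_le_take_of_le {α : Type*} [LinearOrder α] (n : ℕ) {l l' : List α}
    (h : l ≤ l') : l.take n ≤ l'.take n := by
  obtain h | rfl := h.lt_or_eq
  · exact (List.Lex.take h n).elim (fun h => le_of_lt h) le_of_eq
  · rfl

theorem le_lcpLen_iff_take_eq {α : Type*} [DecidableEq α] {n : ℕ} {u : List α} (v : List α)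
    (hn : n ≤ u.length) : n ≤ lcpLen u v ↔ u.take n = v.take n := by
  induction u generalizing n v with
  | nil => simp_all
  | cons a u ih =>
    cases n with
    | zero => simp
    | succ n =>
      cases v with
      | nil => simp [lcpLen]
      | cons b v =>
        by_cases hab : a = b
        · simp [lcpLen, hab, ih v (by simpa using hn)]
        · simp [lcpLen, hab]

section MonotoneOnIcc

variable {β : Type*} [PartialOrder β] {g : ℕ → β} {a b : ℕ}

theorem MonotoneOn.eq_iff_forall_sub_one_eq (hg : MonotoneOn g (Set.Icc a b)) {i i' : ℕ}
    (hi : a ≤ i) (hii' : i ≤ i') (hi' : i' ≤ b) :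
    g i = g i' ↔ ∀ p, i < p → p ≤ i' → g (p - 1) = g p := by
  have mem : ∀ {q}, i ≤ q → q ≤ i' → q ∈ Set.Icc a b := fun h h' =>
    ⟨hi.trans h, h'.trans hi'⟩
  constructor
  · intro h p hp hp'
    refine le_antisymm (hg (mem (by omega) (by omega)) (mem hp.le hp') (by omega)) ?_
    calc g p ≤ g i' := hg (mem hp.le hp') (mem hii' le_rfl) hp'
      _ = g i := h.symm
      _ ≤ g (p - 1) := hg (mem le_rfl hii') (mem (by omega) (by omega)) (by omega)
  · clear mem
    intro h
    induction i', hii' using Nat.le_induction with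
    | base => rfl
    | succ q hq ih =>
      rw [ih (by omega) fun p hp hp' => h p hp (by omega), ← h (q + 1) (by omega) le_rfl]
      rfl

theorem MonotoneOn.card_image_Icc [DecidableEq β] (hg : MonotoneOn g (Set.Icc a b))
    (hab : a ≤ b) :
    ((Finset.Icc a b).image g).card
      = 1 + ((Finset.Ioc a b).filter fun p => g (p - 1) ≠ g p).card := by
  induction b, hab using Nat.le_induction with
  | base => simp
  | succ b hab ih =>
    have hg' : MonotoneOn g (Set.Icc a b) := hg.mono (Set.Icc_subset_Icc_right (by omega))
    rw [← Finset.insert_Icc_right_eq_Icc_add_one (by omega),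
      ← Finset.insert_Ioc_right_eq_Ioc_add_one hab, Finset.image_insert, Finset.filter_insert,
      Nat.add_sub_cancel]
    by_cases hb : g b = g (b + 1)
    · rw [if_neg (not_not.2 hb), Finset.insert_eq_of_mem (hb ▸ Finset.mem_image_of_mem g
        (Finset.right_mem_Icc.2 hab)), ih hg']
    · have hnew : g (b + 1) ∉ (Finset.Icc a b).image g := by
        simp only [Finset.mem_image, Finset.mem_Icc, not_exists, not_and]
        intro q ⟨hq, hq'⟩ heq
        refine hb (le_antisymm (hg ⟨hab, by omega⟩ ⟨by omega, le_rfl⟩ (by omega)) ?_)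
        exact heq ▸ hg ⟨hq, by omega⟩ ⟨hab, by omega⟩ hq'
      rw [if_pos hb, Finset.card_insert_of_notMem hnew, ih hg',
        Finset.card_insert_of_notMem (by simp), Nat.add_assoc]

end MonotoneOnIcc

section Padding

variable {α : Type*} {d : α} {ℓ : ℕ}

theorem le_length_of_append_prefix_of_replicate_prefix {s P L : List α} (h : s ++ P <+: L)
    (hpad : List.replicate ℓ d <+: L) (hdP : d ∉ P) (hP : P ≠ []) : ℓ ≤ s.length := by
  by_contra! hs
  have hP0 : 0 < P.length := List.length_pos_iff.2 hP
  have hsP : s.length < (s ++ P).length := by simpa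
  have hpad' : s.length < (List.replicate ℓ d).length := by simpa
  have key : P[0] = d := by
    calc P[0] = (s ++ P)[s.length] := by simp
      _ = L[s.length]'(hsP.trans_le h.length_le) := h.getElem hsP
      _ = (List.replicate ℓ d)[s.length] := (hpad.getElem hpad').symm
      _ = d := List.getElem_replicate _
  exact hdP (key ▸ List.getElem_mem hP0)

theorem List.IsPrefix.take_eq_of_length_eq {l₁ l₂ : List α} {n : ℕ} (h : l₁ <+: l₂)
    (hn : l₁.length = n) : l₂.take n = l₁ :=
  hn ▸ (List.prefix_iff_eq_take.1 h).symm

theorem exists_context_of_prefix_drop_reverse {P L : List α} {j : ℕ}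
    (hpad : List.replicate ℓ d <+: L) (hdP : d ∉ P) (hP : P ≠ [])
    (h : P.reverse <+: L.reverse.drop j) :
    ∃ X : List α, X.length = ℓ ∧ X ++ P <:+: L ∧
      (L.reverse.drop j).take (P.length + ℓ) = P.reverse ++ X.reverse := by
  rw [List.drop_reverse] at h ⊢
  obtain ⟨s, hs⟩ := List.reverse_prefix.1 h
  have hℓ : ℓ ≤ s.length :=
    le_length_of_append_prefix_of_replicate_prefix (hs ▸ List.take_prefix _ L) hpad hdP hP
  have hX : s.drop (s.length - ℓ) ++ P <:+ L.take (L.length - j) :=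
    ⟨s.take (s.length - ℓ), by rw [← List.append_assoc, List.take_append_drop, hs]⟩
  refine ⟨s.drop (s.length - ℓ), by simp; omega,
    hX.isInfix.trans (List.take_prefix _ L).isInfix, ?_⟩
  refine List.IsPrefix.take_eq_of_length_eq ?_ (by simp; omega)
  rw [← List.reverse_append]
  exact List.reverse_prefix.2 hX

theorem exists_prefix_drop_reverse_of_infix {X P L : List α} (hP : P ≠ [])
    (h : X ++ P <:+: L) :
    ∃ j < L.length, P.reverse ++ X.reverse <+: L.reverse.drop j := by
  obtain ⟨u, v, huv⟩ := List.reverse_infix.2 h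
  rw [List.reverse_append] at huv
  have hlen := congrArg List.length huv
  simp only [List.length_append, List.length_reverse] at hlen
  refine ⟨u.length, ?_, v, ?_⟩
  · have := List.length_pos_iff.2 hP
    omega
  · simp [← huv]

end Padding

theorem image_Icc_take_drop_reverse_eq_image_contexts {α : Type*} {P L : List α} {d : α}
    {ℓ : ℕ} {SA' : ℕ → ℕ} {rs re : ℕ} (hpad : List.replicate ℓ d <+: L) (hdP : d ∉ P)
    (hP : P ≠ []) (hsurj : Set.SurjOn SA' (Set.Iio L.length) (Set.Iio L.length))
    (hre : re < L.length)
    (hInt : ∀ q, q < L.length →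
      ((rs ≤ q ∧ q ≤ re) ↔ P.reverse <+: L.reverse.drop (SA' q))) :
    (fun q => (L.reverse.drop (SA' q)).take (P.length + ℓ)) '' Set.Icc rs re
      = (fun X => P.reverse ++ X.reverse) '' {X | X.length = ℓ ∧ X ++ P <:+: L} := by
  ext M
  constructor
  · rintro ⟨q, ⟨hq, hq'⟩, rfl⟩
    obtain ⟨X, hX, hocc, hM⟩ :=
      exists_context_of_prefix_drop_reverse hpad hdP hP ((hInt q (by omega)).1 ⟨hq, hq'⟩)
    exact ⟨X, ⟨hX, hocc⟩, hM.symm⟩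
  · rintro ⟨X, ⟨hX, hocc⟩, rfl⟩
    obtain ⟨j, hj, hpre⟩ := exists_prefix_drop_reverse_of_infix hP hocc
    obtain ⟨q, hq, rfl⟩ := hsurj hj
    exact ⟨q, (hInt q hq).2 ((List.prefix_append _ _).trans hpre),
      hpre.take_eq_of_length_eq (by simp [hX])⟩

theorem step2_splitting_correct_general
    {α : Type*} [LinearOrder α] (T P : List α) (d : α) (ℓ : ℕ)
    (hdP : d ∉ P) (hPne : P ≠ [])
    (Tp R : List α) (hTp : Tp = List.replicate ℓ d ++ T ++ List.replicate ℓ d)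
    (hR : R = Tp.reverse)
    (N : ℕ) (hN : N = Tp.length)
    (SA' LCP' : ℕ → ℕ)
    (hbij' : Set.BijOn SA' (Set.Iio N) (Set.Iio N))
    (hsort' : ∀ a b : ℕ, a < b → b < N → R.drop (SA' a) < R.drop (SA' b))
    (hLCP' : ∀ k, 0 < k → k < N →
      LCP' k = lcpLen (R.drop (SA' (k - 1))) (R.drop (SA' k)))
    (rs re : ℕ) (hrs : rs ≤ re) (hre : re < N)
    (hInt : ∀ q, q < N →
      ((rs ≤ q ∧ q ≤ re) ↔ P.reverse <+: R.drop (SA' q))) :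
    (∀ q, rs ≤ q → q ≤ re → ∃ X : List α, X.length = ℓ ∧ (X ++ P) <:+: Tp ∧
      (R.drop (SA' q)).take (P.length + ℓ) = P.reverse ++ X.reverse) ∧
    (∀ i i' : ℕ, rs ≤ i → i ≤ i' → i' ≤ re →
      ((R.drop (SA' i)).take (P.length + ℓ)
          = (R.drop (SA' i')).take (P.length + ℓ)
        ↔ ∀ p, i < p → p ≤ i' → P.length + ℓ ≤ LCP' p)) ∧
    {X : List α | X.length = ℓ ∧ (X ++ P) <:+: Tp}.ncard
      = 1 + ((Finset.Ioc rs re).filter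
          (fun p => LCP' p < P.length + ℓ)).card ∧
    (∀ i i' : ℕ, rs ≤ i → i ≤ i' → i' ≤ re →
      (R.drop (SA' i)).take (P.length + ℓ)
        ≤ (R.drop (SA' i')).take (P.length + ℓ)) := by
  subst hR hN
  set g : ℕ → List α := fun q => (Tp.reverse.drop (SA' q)).take (P.length + ℓ) with hg
  have hpad : List.replicate ℓ d <+: Tp :=
    hTp ▸ (List.prefix_append _ _).trans (List.prefix_append _ _)
  have hctx : ∀ q, rs ≤ q → q ≤ re →
      ∃ X : List α, X.length = ℓ ∧ (X ++ P) <:+: Tp ∧ g q = P.reverse ++ X.reverse :=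
    fun q hq hq' =>
      exists_context_of_prefix_drop_reverse hpad hdP hPne ((hInt q (by omega)).1 ⟨hq, hq'⟩)
  have hmono : MonotoneOn g (Set.Icc rs re) := fun i _ i' hi' hii' =>
    List.take_le_take_of_le _ <| hii'.eq_or_lt.elim (fun h => h ▸ le_rfl)
      fun h => (hsort' i i' h (hi'.2.trans_lt hre)).le
  have hsplit : ∀ p, rs < p → p ≤ re → (g (p - 1) = g p ↔ P.length + ℓ ≤ LCP' p) := by
    intro p hp hp'
    obtain ⟨X, hX, -, hgX⟩ := hctx (p - 1) (by omega) (by omega)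
    have hlen : P.length + ℓ ≤ (Tp.reverse.drop (SA' (p - 1))).length := by
      simpa [hg, hX] using congrArg List.length hgX
    rw [hLCP' p (by omega) (by omega), le_lcpLen_iff_take_eq _ hlen]
  refine ⟨hctx, fun i i' hi hii' hi' => ?_, ?_,
    fun i i' hi hii' hi' => hmono ⟨hi, hii'.trans hi'⟩ ⟨hi.trans hii', hi'⟩ hii'⟩
  · rw [hmono.eq_iff_forall_sub_one_eq hi hii' hi']
    exact forall_congr' fun p => forall_congr' fun hp => forall_congr' fun hp' =>
      hsplit p (by omega) (by omega)
  · have hinj : Function.Injective fun X : List α => P.reverse ++ X.reverse :=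
      (List.append_right_injective _).comp List.reverse_injective
    rw [← Set.ncard_image_of_injective _ hinj,
      ← image_Icc_take_drop_reverse_eq_image_contexts hpad hdP hPne hbij'.surjOn hre hInt,
      ← Finset.coe_Icc, ← Finset.coe_image, Set.ncard_coe_finset, hmono.card_image_Icc hrs]
    congr 2
    refine Finset.filter_congr fun p hp => ?_
    rw [Finset.mem_Ioc] at hp
    rw [Ne, hsplit p hp.1 hp.2, not_le]

/-- splitting correctness for step 2 of the contextual matching
algorithm. Let `[rs..re]` be the suffix-array interval (in the suffix array
`SA'` of the reverse `R` of the padded text `Tp`) of `P.reverse`. Then: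
(a) every suffix in the interval begins with `P.reverse ++ X.reverse` for some
left context `X` of length `ℓ` with `X ++ P` occurring in `Tp`;
(b) two ranks lie in the same block (i.e. their suffixes share their first
`|P| + ℓ` symbols) iff `LCP'[p] ≥ |P| + ℓ` for all `p` strictly between them,
so the blocks start exactly at `rs` and at the positions `p ∈ (rs..re]` with
`LCP'[p] < |P| + ℓ`;
(c) the number of blocks, `1 +` the number of such split positions, equals the
number of distinct strings `X` of length `ℓ` with `X ++ P` occurring in the
padded text; and
(d) the blocks appear in lexicographic order of `X.reverse`. -/
theorem step2_splitting_correct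
    {α : Type*} [LinearOrder α] (T P : List α) (d : α) (ℓ : ℕ)
    (hdP : d ∉ P) (hdT : d ∉ T) (hPne : P ≠ [])
    (Tp R : List α) (hTp : Tp = List.replicate ℓ d ++ T ++ List.replicate ℓ d)
    (hR : R = Tp.reverse)
    (N : ℕ) (hN : N = Tp.length)
    (SA' LCP' : ℕ → ℕ)
    (hbij' : Set.BijOn SA' (Set.Iio N) (Set.Iio N))
    (hsort' : ∀ a b : ℕ, a < b → b < N → R.drop (SA' a) < R.drop (SA' b))
    (hLCP' : ∀ k, 0 < k → k < N →
      LCP' k = lcpLen (R.drop (SA' (k - 1))) (R.drop (SA' k)))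
    (rs re : ℕ) (hrs : rs ≤ re) (hre : re < N)
    (hInt : ∀ q, q < N →
      ((rs ≤ q ∧ q ≤ re) ↔ P.reverse <+: R.drop (SA' q))) :
    (∀ q, rs ≤ q → q ≤ re → ∃ X : List α, X.length = ℓ ∧ (X ++ P) <:+: Tp ∧
      (R.drop (SA' q)).take (P.length + ℓ) = P.reverse ++ X.reverse) ∧
    (∀ i i' : ℕ, rs ≤ i → i ≤ i' → i' ≤ re →
      ((R.drop (SA' i)).take (P.length + ℓ)
          = (R.drop (SA' i')).take (P.length + ℓ)
        ↔ ∀ p, i < p → p ≤ i' → P.length + ℓ ≤ LCP' p)) ∧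
    {X : List α | X.length = ℓ ∧ (X ++ P) <:+: Tp}.ncard
      = 1 + ((Finset.Ioc rs re).filter
          (fun p => LCP' p < P.length + ℓ)).card ∧
    (∀ i i' : ℕ, rs ≤ i → i ≤ i' → i' ≤ re →
      (R.drop (SA' i)).take (P.length + ℓ)
        ≤ (R.drop (SA' i')).take (P.length + ℓ)) :=
  step2_splitting_correct_general T P d ℓ hdP hPne Tp R hTp hR N hN SA' LCP' hbij' hsort' hLCP' rs
    re hrs hre hInt
end
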